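/- Let (p_{i,j})_{1 ≤ i ≤ j ≤ n} be any family of primitive elements of H_R, let C be a vector space with basis (e_0,...,e_n), and define Δ_C(e_0) = 1 ⊗ e_0 and Δ_C(e_i) = Σ_{j=0}^{i−1} (Σ_{decompositions I_{i_1,j_1}...I_{i_k,j_k} of {j+1,...,i}} p_{i_k,j_k} ⊤ ... ⊤ p_{i_1,j_1}) ⊗ e_j + 1 ⊗ e_i. Then (C, Δ_C) is a left H_R-comodule. -/

import Mathlib

open scoped TensorProduct

section

variable {H : Type*} [CommRing H] [Bialgebra ℚ H]

/-- `segAux t q n a = q (a+n) ⊤ ... ⊤ q a`, the iterated natural growth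
(left-nested) for a bilinear operation `t`. -/
def segAux (t : H →ₗ[ℚ] H →ₗ[ℚ] H) (q : ℕ → H) : ℕ → ℕ → H
  | 0, a => q a
  | n + 1, a => t (segAux t q n (a + 1)) (q a)

/-- `seg t q a b = q_b ⊤ ... ⊤ q_a` for `a ≤ b`. -/
def seg (t : H →ₗ[ℚ] H →ₗ[ℚ] H) (q : ℕ → H) (a b : ℕ) : H :=
  segAux t q (b - a) a

/-- The term `p_{i_k,j_k} ⊤ ... ⊤ p_{i_1,j_1}` attached to the decomposition of the
interval `{a, ..., b}` determined by the (sorted) list of cut points: a cut point `c`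
separates `{..., c}` from `{c+1, ...}`. -/
def blockTerm (t : H →ₗ[ℚ] H →ₗ[ℚ] H) (p : ℕ → ℕ → H) : ℕ → ℕ → List ℕ → H
  | a, b, [] => p a b
  | a, b, c :: rest => t (blockTerm t p (c + 1) b rest) (p a c)

/-- The reduced coproduct `Δ̃(x) = Δ(x) − 1 ⊗ x − x ⊗ 1`. -/
noncomputable def rcomul (x : H) : H ⊗[ℚ] H :=
  Coalgebra.comul x - 1 ⊗ₜ[ℚ] x - x ⊗ₜ[ℚ] 1

end

/-!
Write `D(a, b)` for the sum over the decompositions of `{a, ..., b}`. Splitting off the first block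
gives `D(a, b) = p_{a,b} + ∑_c D(c+1, b) ⊤ p_{a,c}`. The iterated coproduct formula shows that
`Δ̃(X ⊤ y) = X ⊗ y + (id ⊗ (· ⊤ y)) Δ̃(X)` for `y` primitive and `X` in the span of growths of
primitives, and induction on `b - a` then yields `Δ̃ D(a, b) = ∑_c D(c+1, b) ⊗ D(a, c)`, which also
forces `ε(D(a, b)) = 0`. These are the coassociativity and counit conditions for a coaction that is
unitriangular in the basis `(e_i)`.
-/

lemma Finset.sum_Icc_one_succ {M : Type*} [AddCommMonoid M] (f : ℕ → M) (m : ℕ) :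
    ∑ j ∈ Finset.Icc 1 (m + 1), f j = f 1 + ∑ j ∈ Finset.Icc 1 m, f (j + 1) := by
  rw [← Finset.Ico_add_one_right_eq_Icc, Finset.sum_eq_sum_Ico_succ_bot (by omega),
    ← Finset.Ico_add_one_right_eq_Icc, Finset.sum_Ico_add']

section Growth

variable {H : Type*} [CommRing H] [Bialgebra ℚ H] (t : H →ₗ[ℚ] H →ₗ[ℚ] H)

lemma segAux_congr {q q' : ℕ → H} {n a : ℕ} (h : ∀ k, a ≤ k → k ≤ a + n → q k = q' k) :
    segAux t q n a = segAux t q' n a := by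
  induction n generalizing a with
  | zero => exact h a le_rfl (Nat.le_add_right a 0)
  | succ n ih =>
    simp only [segAux]
    rw [ih fun k hk hk' => h k (by omega) (by omega), h a le_rfl (by omega)]

lemma segAux_succ_index (q : ℕ → H) (n a : ℕ) :
    segAux t q n (a + 1) = segAux t (fun k => q (k + 1)) n a := by
  induction n generalizing a with
  | zero => rfl
  | succ n ih => simp only [segAux, ih]

lemma seg_succ_succ (q : ℕ → H) (a b : ℕ) :
    seg t q (a + 1) (b + 1) = seg t (fun k => q (k + 1)) a b := by
  rw [seg, seg, Nat.add_sub_add_right, segAux_succ_index]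

lemma seg_of_lt (q : ℕ → H) {a b : ℕ} (h : a < b) :
    seg t q a b = t (seg t q (a + 1) b) (q a) := by
  rw [seg, seg, show b - a = b - (a + 1) + 1 by omega, segAux]

/-- The family `y, q 1, q 2, ...` indexed from `1`. -/
def prependFamily (y : H) (q : ℕ → H) (k : ℕ) : H :=
  if k ≤ 1 then y else q (k - 1)

lemma seg_prependFamily_succ (y : H) (q : ℕ → H) {j : ℕ} (hj : 1 ≤ j) (m : ℕ) :
    seg t (prependFamily y q) (j + 1) (m + 1) = seg t q j m := by
  rw [seg_succ_succ]
  exact segAux_congr t fun k hk _ => by simp [prependFamily, show ¬k + 1 ≤ 1 by omega]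

lemma seg_prependFamily_one (y : H) (q : ℕ → H) {m : ℕ} (hm : 1 ≤ m) :
    seg t (prependFamily y q) 1 (m + 1) = t (seg t q 1 m) y := by
  rw [seg_of_lt t _ (by omega), seg_prependFamily_succ t y q le_rfl]
  rfl

def IsPrimitiveElement (x : H) : Prop :=
  Coalgebra.comul (R := ℚ) x = x ⊗ₜ[ℚ] 1 + 1 ⊗ₜ[ℚ] x

def GrowthCoproductFormula : Prop :=
  ∀ (q : ℕ → H) (m : ℕ), 1 ≤ m → (∀ k, 1 ≤ k → k ≤ m → IsPrimitiveElement (q k)) →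
    rcomul (seg t q 1 m) = ∑ j ∈ Finset.Icc 1 (m - 1), seg t q (j + 1) m ⊗ₜ[ℚ] seg t q 1 j

def growthMonomials : Set H :=
  {x | ∃ (q : ℕ → H) (m : ℕ), 1 ≤ m ∧ (∀ k, 1 ≤ k → k ≤ m → IsPrimitiveElement (q k)) ∧
    seg t q 1 m = x}

variable {t}

lemma IsPrimitiveElement.mem_growthMonomials {y : H} (hy : IsPrimitiveElement y) :
    y ∈ growthMonomials t :=
  ⟨fun _ => y, 1, le_rfl, fun _ _ _ => hy, rfl⟩

lemma isPrimitiveElement_prependFamily {y : H} (hy : IsPrimitiveElement y) {q : ℕ → H} {m : ℕ}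
    (hq : ∀ k, 1 ≤ k → k ≤ m → IsPrimitiveElement (q k)) :
    ∀ k, 1 ≤ k → k ≤ m + 1 → IsPrimitiveElement (prependFamily y q k) := by
  intro k hk hkm
  unfold prependFamily
  split_ifs
  · exact hy
  · exact hq (k - 1) (by omega) (by omega)

lemma growthMonomials.apply_mem {x y : H} (hx : x ∈ growthMonomials t)
    (hy : IsPrimitiveElement y) : t x y ∈ growthMonomials t := by
  obtain ⟨q, m, hm, hq, rfl⟩ := hx
  exact ⟨prependFamily y q, m + 1, by omega, isPrimitiveElement_prependFamily hy hq,
    seg_prependFamily_one t y q hm⟩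

lemma rcomul_apply_of_mem_growthMonomials (hgrowth : GrowthCoproductFormula t) {x y : H}
    (hx : x ∈ growthMonomials t) (hy : IsPrimitiveElement y) :
    rcomul (t x y) = x ⊗ₜ[ℚ] y + (t.flip y).lTensor H (rcomul x) := by
  obtain ⟨q, m, hm, hq, rfl⟩ := hx
  obtain ⟨k, rfl⟩ : ∃ k, m = k + 1 := ⟨m - 1, by omega⟩
  -- Compare the formula for `y, q 1, ..., q m` with the one for `q 1, ..., q m`: the cut right
  -- after `y` gives `x ⊗ y`, every other cut is a cut of `x` with `y` grown onto its right factor.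
  have hx := hgrowth q (k + 1) hm hq
  have hxy := hgrowth (prependFamily y q) (k + 1 + 1) (by omega)
    (isPrimitiveElement_prependFamily hy hq)
  rw [seg_prependFamily_one t y q hm] at hxy
  rw [hxy, hx, Nat.add_sub_cancel, Nat.add_sub_cancel, Finset.sum_Icc_one_succ,
    seg_prependFamily_succ t y q le_rfl, map_sum]
  congr 1
  refine Finset.sum_congr rfl fun j hj => ?_
  rw [Finset.mem_Icc] at hj
  rw [seg_prependFamily_succ t y q (by omega), seg_prependFamily_one t y q hj.1]
  rfl

end Growth

section Decompositions

variable {H : Type*} [CommRing H] [Bialgebra ℚ H] (t : H →ₗ[ℚ] H →ₗ[ℚ] H)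

/-- The sum over all decompositions of `{a, ..., b}`, a decomposition being given by its set of
cut points in `[a, b)`. -/
noncomputable def decompositionSum (p : ℕ → ℕ → H) (a b : ℕ) : H :=
  ∑ S ∈ (Finset.Ico a b).powerset, blockTerm t p a b (S.sort (· ≤ ·))

lemma sum_powerset_Ico_blockTerm (p : ℕ → ℕ → H) (a b a' : ℕ) :
    ∑ S ∈ (Finset.Ico a' b).powerset, blockTerm t p a b (S.sort (· ≤ ·))
      = p a b + ∑ c ∈ Finset.Ico a' b, t (decompositionSum t p (c + 1) b) (p a c) := by
  induction hd : b - a' generalizing a' with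
  | zero => simp [Finset.Ico_eq_empty_of_le (show b ≤ a' by omega), blockTerm]
  | succ d ih =>
    have ha' : a' < b := by omega
    have hcut : ∀ S ∈ (Finset.Ico (a' + 1) b).powerset,
        blockTerm t p a b ((insert a' S).sort (· ≤ ·))
          = t (blockTerm t p (a' + 1) b (S.sort (· ≤ ·))) (p a a') := by
      intro S hS
      have hS' : ∀ c ∈ S, a' + 1 ≤ c := fun c hc =>
        (Finset.mem_Ico.mp (Finset.mem_powerset.mp hS hc)).1
      rw [Finset.sort_insert _ (fun c hc => by have := hS' c hc; omega)
        (fun h => by have := hS' a' h; omega)]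
      rfl
    rw [← Finset.insert_Ico_add_one_left_eq_Ico ha', Finset.sum_powerset_insert (by simp),
      ih (a' + 1) (by omega), Finset.sum_congr rfl hcut, ← LinearMap.sum_apply, ← map_sum,
      Finset.sum_insert (by simp), decompositionSum]
    abel

lemma decompositionSum_eq_add_sum (p : ℕ → ℕ → H) (a b : ℕ) :
    decompositionSum t p a b
      = p a b + ∑ c ∈ Finset.Ico a b, t (decompositionSum t p (c + 1) b) (p a c) :=
  sum_powerset_Ico_blockTerm t p a b a

end Decompositions

section Coproduct

variable {H : Type*} [CommRing H] [Bialgebra ℚ H] {t : H →ₗ[ℚ] H →ₗ[ℚ] H}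

noncomputable def rcomulLinear : H →ₗ[ℚ] H ⊗[ℚ] H :=
  Coalgebra.comul - TensorProduct.mk ℚ H H 1 - (TensorProduct.mk ℚ H H).flip 1

lemma rcomulLinear_apply (x : H) : rcomulLinear x = rcomul x := rfl

lemma comul_eq_add_rcomul (x : H) :
    Coalgebra.comul (R := ℚ) x = x ⊗ₜ[ℚ] 1 + 1 ⊗ₜ[ℚ] x + rcomul x := by
  rw [rcomul]
  abel

lemma IsPrimitiveElement.rcomul_eq_zero {x : H} (hx : IsPrimitiveElement x) : rcomul x = 0 := by
  rw [rcomul, hx]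
  abel

lemma rcomul_apply_of_mem_span (hgrowth : GrowthCoproductFormula t) {x y : H}
    (hx : x ∈ Submodule.span ℚ (growthMonomials t)) (hy : IsPrimitiveElement y) :
    rcomul (t x y) = x ⊗ₜ[ℚ] y + (t.flip y).lTensor H (rcomul x) := by
  have hle : Submodule.span ℚ (growthMonomials t) ≤ LinearMap.eqLocus (rcomulLinear ∘ₗ t.flip y)
      ((TensorProduct.mk ℚ H H).flip y + (t.flip y).lTensor H ∘ₗ rcomulLinear) :=
    Submodule.span_le.mpr fun z hz => rcomul_apply_of_mem_growthMonomials hgrowth hz hy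
  exact hle hx

lemma apply_mem_span_growthMonomials {x y : H} (hx : x ∈ Submodule.span ℚ (growthMonomials t))
    (hy : IsPrimitiveElement y) : t x y ∈ Submodule.span ℚ (growthMonomials t) :=
  (Submodule.map_span_le (t.flip y) _ _).mpr
    (fun z hz => Submodule.subset_span (growthMonomials.apply_mem (x := z) hz hy))
    (Submodule.mem_map_of_mem hx)

variable {p : ℕ → ℕ → H}

lemma decompositionSum_mem_span {a b : ℕ} (hab : a ≤ b)
    (hp : ∀ i j, a ≤ i → i ≤ j → j ≤ b → IsPrimitiveElement (p i j)) :
    decompositionSum t p a b ∈ Submodule.span ℚ (growthMonomials t) := by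
  induction hd : b - a using Nat.strong_induction_on generalizing a with
  | _ d ih =>
  rw [decompositionSum_eq_add_sum]
  refine add_mem (Submodule.subset_span (hp a b le_rfl hab le_rfl).mem_growthMonomials)
    (Submodule.sum_mem _ fun c hc => ?_)
  rw [Finset.mem_Ico] at hc
  exact apply_mem_span_growthMonomials
    (ih _ (by omega) (by omega) (fun i j hi => hp i j (by omega)) rfl) (hp a c le_rfl hc.1 hc.2.le)

lemma rcomul_decompositionSum (hgrowth : GrowthCoproductFormula t) {a b : ℕ} (hab : a ≤ b)
    (hp : ∀ i j, a ≤ i → i ≤ j → j ≤ b → IsPrimitiveElement (p i j)) :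
    rcomul (decompositionSum t p a b)
      = ∑ c ∈ Finset.Ico a b, decompositionSum t p (c + 1) b ⊗ₜ[ℚ] decompositionSum t p a c := by
  induction hd : b - a using Nat.strong_induction_on generalizing a with
  | _ d ih =>
  set D := decompositionSum t p
  have hD : ∀ a b, D a b = p a b + ∑ c ∈ Finset.Ico a b, t (D (c + 1) b) (p a c) :=
    decompositionSum_eq_add_sum t p
  calc rcomul (D a b) = ∑ c ∈ Finset.Ico a b, rcomul (t (D (c + 1) b) (p a c)) := by
        rw [hD, ← rcomulLinear_apply, map_add, map_sum, rcomulLinear_apply,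
          (hp a b le_rfl hab le_rfl).rcomul_eq_zero, zero_add]
        rfl
    _ = ∑ c ∈ Finset.Ico a b, (D (c + 1) b ⊗ₜ[ℚ] p a c +
          ∑ e ∈ Finset.Ico (c + 1) b, D (e + 1) b ⊗ₜ[ℚ] t (D (c + 1) e) (p a c)) := by
        refine Finset.sum_congr rfl fun c hc => ?_
        rw [Finset.mem_Ico] at hc
        have hp' : ∀ i j, c + 1 ≤ i → i ≤ j → j ≤ b → IsPrimitiveElement (p i j) :=
          fun i j hi => hp i j (by omega)
        rw [rcomul_apply_of_mem_span hgrowth (decompositionSum_mem_span hc.2 hp')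
          (hp a c le_rfl hc.1 hc.2.le), ih _ (by omega) hc.2 hp' rfl, map_sum]
        rfl
    _ = ∑ e ∈ Finset.Ico a b, (D (e + 1) b ⊗ₜ[ℚ] p a e +
          ∑ c ∈ Finset.Ico a e, D (e + 1) b ⊗ₜ[ℚ] t (D (c + 1) e) (p a c)) := by
        rw [Finset.sum_add_distrib, Finset.sum_add_distrib,
          Finset.sum_comm' (t' := Finset.Ico a b) (s' := fun e => Finset.Ico a e)]
        intro c e
        simp only [Finset.mem_Ico]
        omega
    _ = ∑ e ∈ Finset.Ico a b, D (e + 1) b ⊗ₜ[ℚ] D a e := by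
        refine Finset.sum_congr rfl fun e _ => ?_
        rw [hD a e, TensorProduct.tmul_add, TensorProduct.tmul_sum]

lemma counit_eq_zero_of_rcomul_eq_sum {ι : Type*} {s : Finset ι} {y z : ι → H} {x : H}
    (hx : rcomul x = ∑ i ∈ s, y i ⊗ₜ[ℚ] z i)
    (hz : ∀ i ∈ s, Coalgebra.counit (R := ℚ) (z i) = 0) :
    Coalgebra.counit (R := ℚ) x = 0 := by
  have h := Coalgebra.lTensor_counit_comul (R := ℚ) x
  rw [comul_eq_add_rcomul, hx, map_add, map_add, map_sum,
    Finset.sum_eq_zero fun i hi => by rw [LinearMap.lTensor_tmul, hz i hi, TensorProduct.tmul_zero],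
    add_zero, LinearMap.lTensor_tmul, Bialgebra.counit_one, add_eq_left] at h
  simpa using congrArg (Coalgebra.counit (R := ℚ) ∘ TensorProduct.rid ℚ H) h

lemma counit_decompositionSum (hgrowth : GrowthCoproductFormula t) {a b : ℕ} (hab : a ≤ b)
    (hp : ∀ i j, a ≤ i → i ≤ j → j ≤ b → IsPrimitiveElement (p i j)) :
    Coalgebra.counit (R := ℚ) (decompositionSum t p a b) = 0 := by
  induction b using Nat.strong_induction_on with
  | _ b ih =>
  refine counit_eq_zero_of_rcomul_eq_sum (rcomul_decompositionSum hgrowth hab hp) fun c hc => ?_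
  rw [Finset.mem_Ico] at hc
  exact ih c hc.2 hc.1 fun i j hi hij hj => hp i j hi hij (by omega)

end Coproduct

section TriangularCoaction

open Finset TensorProduct

variable {R C M ι : Type*} [CommSemiring R] [Semiring C] [Bialgebra R C] [AddCommMonoid M]
  [Module R M] [LinearOrder ι] [LocallyFiniteOrderBot ι]
  (e : Module.Basis ι R M) (D : ι → ι → C)

noncomputable def triangularCoaction : M →ₗ[R] C ⊗[R] M :=
  e.constr R fun i => ∑ j ∈ Iio i, D j i ⊗ₜ[R] e j + 1 ⊗ₜ[R] e i

lemma triangularCoaction_basis (i : ι) :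
    triangularCoaction e D (e i) = ∑ j ∈ Iio i, D j i ⊗ₜ[R] e j + 1 ⊗ₜ[R] e i :=
  e.constr_basis R _ i

theorem triangularCoaction_coassoc [LocallyFiniteOrder ι]
    (hD : ∀ j i, j < i → Coalgebra.comul (R := R) (D j i)
      = D j i ⊗ₜ[R] 1 + 1 ⊗ₜ[R] D j i + ∑ k ∈ Ioo j i, D k i ⊗ₜ[R] D j k) :
    (TensorProduct.assoc R C C M).toLinearMap ∘ₗ (Coalgebra.comul (R := R)).rTensor M
        ∘ₗ triangularCoaction e D
      = (triangularCoaction e D).lTensor C ∘ₗ triangularCoaction e D := by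
  refine e.ext fun i => ?_
  have hswap : ∑ j ∈ Iio i, ∑ k ∈ Ioo j i, D k i ⊗ₜ[R] (D j k ⊗ₜ[R] e j)
      = ∑ k ∈ Iio i, ∑ j ∈ Iio k, D k i ⊗ₜ[R] (D j k ⊗ₜ[R] e j) :=
    sum_comm' fun j k => by
      simp only [mem_Iio, mem_Ioo]
      exact ⟨fun ⟨_, hjk, hki⟩ => ⟨hjk, hki⟩, fun ⟨hjk, hki⟩ => ⟨hjk.trans hki, hjk, hki⟩⟩
  simp only [LinearMap.comp_apply, LinearEquiv.coe_coe, triangularCoaction_basis, map_add,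
    map_sum, LinearMap.rTensor_tmul, LinearMap.lTensor_tmul]
  rw [sum_congr rfl fun j hj => by rw [hD j i (mem_Iio.mp hj)]]
  simp only [add_tmul, sum_tmul, map_add, map_sum, assoc_tmul, Bialgebra.comul_one,
    Algebra.TensorProduct.one_def, tmul_add, tmul_sum, sum_add_distrib, hswap]
  abel

theorem triangularCoaction_counit (hD : ∀ j i, j < i → Coalgebra.counit (R := R) (D j i) = 0) :
    (TensorProduct.lid R M).toLinearMap ∘ₗ (Coalgebra.counit (R := R)).rTensor M
        ∘ₗ triangularCoaction e D = LinearMap.id := by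
  refine e.ext fun i => ?_
  simp only [LinearMap.comp_apply, LinearEquiv.coe_coe, triangularCoaction_basis, map_add,
    map_sum, LinearMap.rTensor_tmul, Bialgebra.counit_one, lid_tmul, one_smul, LinearMap.id_apply]
  rw [sum_eq_zero fun j hj => by rw [hD j i (mem_Iio.mp hj), zero_smul], zero_add]

end TriangularCoaction

section

variable {H : Type*} [CommRing H] [Bialgebra ℚ H]

theorem comodule_from_primitive_family_general
    (t : H →ₗ[ℚ] H →ₗ[ℚ] H)
    -- the iterated natural-growth coproduct formula for primitive elements
    (hgrowth : ∀ (q : ℕ → H) (m : ℕ), 1 ≤ m →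
      (∀ k, 1 ≤ k → k ≤ m →
        (Coalgebra.comul (q k) : H ⊗[ℚ] H) = q k ⊗ₜ[ℚ] 1 + 1 ⊗ₜ[ℚ] q k) →
      rcomul (seg t q 1 m)
        = ∑ j ∈ Finset.Icc 1 (m - 1), seg t q (j + 1) m ⊗ₜ[ℚ] seg t q 1 j)
    (n : ℕ)
    (p : ℕ → ℕ → H)
    (hp : ∀ i j, 1 ≤ i → i ≤ j → j ≤ n →
      (Coalgebra.comul (p i j) : H ⊗[ℚ] H) = p i j ⊗ₜ[ℚ] 1 + 1 ⊗ₜ[ℚ] p i j)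
    (ρ : (Fin (n + 1) → ℚ) →ₗ[ℚ] H ⊗[ℚ] (Fin (n + 1) → ℚ))
    (hρ : ρ = (Pi.basisFun ℚ (Fin (n + 1))).constr ℚ (fun i : Fin (n + 1) =>
      (∑ j ∈ Finset.Iio i,
        (∑ S ∈ (Finset.Ico ((j : ℕ) + 1) (i : ℕ)).powerset,
          blockTerm t p ((j : ℕ) + 1) (i : ℕ) (S.sort (· ≤ ·)))
          ⊗ₜ[ℚ] (Pi.basisFun ℚ (Fin (n + 1))) j)
        + 1 ⊗ₜ[ℚ] (Pi.basisFun ℚ (Fin (n + 1))) i)) :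
    (∀ x : Fin (n + 1) → ℚ,
      (TensorProduct.assoc ℚ H H (Fin (n + 1) → ℚ))
          ((LinearMap.rTensor (Fin (n + 1) → ℚ) (Coalgebra.comul (R := ℚ))) (ρ x))
        = (LinearMap.lTensor H ρ) (ρ x)) ∧
    (∀ x : Fin (n + 1) → ℚ,
      (TensorProduct.lid ℚ (Fin (n + 1) → ℚ))
          ((LinearMap.rTensor (Fin (n + 1) → ℚ) (Coalgebra.counit (R := ℚ))) (ρ x))
        = x) := by
  subst hρ
  have hprim : ∀ j i : Fin (n + 1), ∀ a b, (j : ℕ) + 1 ≤ a → a ≤ b → b ≤ i →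
      IsPrimitiveElement (p a b) := fun j i a b ha hab hb => hp a b (by omega) hab (by omega)
  refine ⟨LinearMap.congr_fun (triangularCoaction_coassoc (Pi.basisFun ℚ (Fin (n + 1)))
      (fun j i => decompositionSum t p (j + 1) i) fun j i hji => ?_),
    LinearMap.congr_fun (triangularCoaction_counit _ _ fun j i hji =>
      counit_decompositionSum hgrowth hji (hprim j i))⟩
  rw [comul_eq_add_rcomul, rcomul_decompositionSum (a := j + 1) hgrowth hji (hprim j i),
    Finset.Ico_add_one_left_eq_Ioo, ← Fin.map_valEmbedding_Ioo, Finset.sum_map]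
  rfl

/-- Given a family `(p_{i,j})_{1 ≤ i ≤ j ≤ n}` of primitive elements of the Hopf
algebra of rooted trees `H` and its natural growth operation `⊤ = t` (satisfying the
iterated-coproduct formula for primitives), the linear map `Δ_C` on the vector space
`C` with basis `(e_0, ..., e_n)` defined by `Δ_C(e_0) = 1 ⊗ e_0` and
`Δ_C(e_i) = Σ_{j<i} (Σ_{decompositions of {j+1,...,i}} p_{i_k,j_k} ⊤ ... ⊤ p_{i_1,j_1})
⊗ e_j + 1 ⊗ e_i` makes `C` a left `H`-comodule. -/
theorem comodule_from_primitive_family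
    (t : H →ₗ[ℚ] H →ₗ[ℚ] H)
    -- the iterated natural-growth coproduct formula for primitive elements
    (hgrowth : ∀ (q : ℕ → H) (m : ℕ), 1 ≤ m →
      (∀ k, 1 ≤ k → k ≤ m →
        (Coalgebra.comul (q k) : H ⊗[ℚ] H) = q k ⊗ₜ[ℚ] 1 + 1 ⊗ₜ[ℚ] q k) →
      rcomul (seg t q 1 m)
        = ∑ j ∈ Finset.Icc 1 (m - 1), seg t q (j + 1) m ⊗ₜ[ℚ] seg t q 1 j)
    (n : ℕ) (hn : 1 ≤ n)
    (p : ℕ → ℕ → H)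
    (hp : ∀ i j, 1 ≤ i → i ≤ j → j ≤ n →
      (Coalgebra.comul (p i j) : H ⊗[ℚ] H) = p i j ⊗ₜ[ℚ] 1 + 1 ⊗ₜ[ℚ] p i j)
    (ρ : (Fin (n + 1) → ℚ) →ₗ[ℚ] H ⊗[ℚ] (Fin (n + 1) → ℚ))
    (hρ : ρ = (Pi.basisFun ℚ (Fin (n + 1))).constr ℚ (fun i : Fin (n + 1) =>
      (∑ j ∈ Finset.Iio i,
        (∑ S ∈ (Finset.Ico ((j : ℕ) + 1) (i : ℕ)).powerset,
          blockTerm t p ((j : ℕ) + 1) (i : ℕ) (S.sort (· ≤ ·)))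
          ⊗ₜ[ℚ] (Pi.basisFun ℚ (Fin (n + 1))) j)
        + 1 ⊗ₜ[ℚ] (Pi.basisFun ℚ (Fin (n + 1))) i)) :
    (∀ x : Fin (n + 1) → ℚ,
      (TensorProduct.assoc ℚ H H (Fin (n + 1) → ℚ))
          ((LinearMap.rTensor (Fin (n + 1) → ℚ) (Coalgebra.comul (R := ℚ))) (ρ x))
        = (LinearMap.lTensor H ρ) (ρ x)) ∧
    (∀ x : Fin (n + 1) → ℚ,
      (TensorProduct.lid ℚ (Fin (n + 1) → ℚ))
          ((LinearMap.rTensor (Fin (n + 1) → ℚ) (Coalgebra.counit (R := ℚ))) (ρ x))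
        = x) :=
  comodule_from_primitive_family_general t hgrowth n p hp ρ hρ

end
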